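/- arXiv:2305.19335 — 2 statements merged into one kernel-verified Lean document; each statement's English description precedes it below -/
import Mathlib

section
/- Let h : [n] → [n] be a Hessenberg function and w ∈ S_n with the property that w⁻¹(w(j)−1) ≤ h(j) for all j ∈ [n] (with convention w(0)=0, i.e., the condition is vacuous when w(j)=1). Set v := w₀·w. If k, ℓ ∈ [n] satisfy k ≥ h(ℓ) and v(k) > v(ℓ)+1, then (n+1−v(k)) + (v(ℓ)+1) ≤ n and v⁻¹(v(ℓ)+1) ≤ w⁻¹(n+1−v(k)). -/
/-! Since `v = w₀ w` reverses values, `v(ℓ) + 1` is the reversal of `w(ℓ) - 1`, so the fixed-point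
condition at `ℓ` gives `v⁻¹(v(ℓ) + 1) = w⁻¹(w(ℓ) - 1) ≤ h(ℓ) ≤ k = w⁻¹(w₀ v(k))`. -/

theorem Fin.val_rev_eq_sub_one_of_val_eq_add_one {n : ℕ} {a b : Fin n}
    (hab : (a : ℕ) = b + 1) : (a.rev : ℕ) = b.rev - 1 := by
  simp only [Fin.val_rev]
  omega

theorem not_in_Dw_general {n : ℕ} (h : Fin n → Fin n) (w : Equiv.Perm (Fin n))
    (hfix : ∀ j : Fin n, 1 ≤ (w j : ℕ) → ∀ b : Fin n,
      (b : ℕ) = (w j : ℕ) - 1 → (w⁻¹ b : ℕ) ≤ (h j : ℕ))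
    (k ℓ : Fin n)
    (hk : (h ℓ : ℕ) ≤ (k : ℕ)) :
    let v : Equiv.Perm (Fin n) := (Fin.revPerm : Equiv.Perm (Fin n)) * w
    ((v ℓ : ℕ) + 1 < (v k : ℕ)) →
      ((n - (v k : ℕ)) + ((v ℓ : ℕ) + 2) ≤ n ∧
       ∀ a : Fin n, (a : ℕ) = (v ℓ : ℕ) + 1 →
         (v⁻¹ a : ℕ) ≤ (w⁻¹ (Fin.rev (v k)) : ℕ)) := by
  intro v hlt
  have hv : ∀ i, v i = (w i).rev := fun _ => rfl
  have hwℓ : 1 ≤ (w ℓ : ℕ) := by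
    simp only [hv, Fin.val_rev] at hlt
    omega
  refine ⟨by omega, fun a ha => ?_⟩
  have hrev : (a.rev : ℕ) = (w ℓ : ℕ) - 1 := by
    rw [Fin.val_rev_eq_sub_one_of_val_eq_add_one ha, hv, Fin.rev_rev]
  calc (v⁻¹ a : ℕ) = w⁻¹ a.rev := rfl
    _ ≤ h ℓ := hfix ℓ hwℓ _ hrev
    _ ≤ k := hk
    _ = w⁻¹ (v k).rev := by rw [hv, Fin.rev_rev, Equiv.Perm.coe_inv, Equiv.symm_apply_apply]

/-- 0-indexed formulation on `Fin n`. Let h be a Hessenberg function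
(weakly increasing, h(i) ≥ i), and let w satisfy the S-fixed-point condition
w⁻¹(w(j)−1) ≤ h(j) for all j (vacuous when w(j) = 1 in 1-based terms).
Set v := w₀·w, so v(i) = Fin.rev (w i). If k ≥ h(ℓ) and v(k) > v(ℓ)+1, then
(n+1−v(k)) + (v(ℓ)+1) ≤ n and v⁻¹(v(ℓ)+1) ≤ w⁻¹(n+1−v(k)) (in 1-based terms);
here n+1−v(k) corresponds to `Fin.rev (v k)` and arithmetic on values is via ℕ. -/
theorem not_in_Dw {n : ℕ} (h : Fin n → Fin n) (w : Equiv.Perm (Fin n))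
    (hgeq : ∀ i : Fin n, (i : ℕ) ≤ (h i : ℕ))
    (hmono : ∀ i j : Fin n, i ≤ j → h i ≤ h j)
    (hfix : ∀ j : Fin n, 1 ≤ (w j : ℕ) → ∀ b : Fin n,
      (b : ℕ) = (w j : ℕ) - 1 → (w⁻¹ b : ℕ) ≤ (h j : ℕ))
    (k ℓ : Fin n)
    (hk : (h ℓ : ℕ) ≤ (k : ℕ)) :
    let v : Equiv.Perm (Fin n) := (Fin.revPerm : Equiv.Perm (Fin n)) * w
    ((v ℓ : ℕ) + 1 < (v k : ℕ)) →
      ((n - (v k : ℕ)) + ((v ℓ : ℕ) + 2) ≤ n ∧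
       ∀ a : Fin n, (a : ℕ) = (v ℓ : ℕ) + 1 →
         (v⁻¹ a : ℕ) ≤ (w⁻¹ (Fin.rev (v k)) : ℕ)) :=
  not_in_Dw_general h w hfix k ℓ hk
end

section
/- Let N be the n×n regular nilpotent Jordan block (N_{i,i+1} = 1, all other entries 0), and let M be an n×n lower triangular matrix over a field with 1's on the diagonal. If w₀(i) = n+1−i and P = P_{w₀}M, then the matrix F = P⁻¹NP is strictly lower triangular except that its subdiagonal entries F_{i+1,i} include entries equal to 1 when indices permit; in particular F_{k,ℓ} = 0 for all k ≤ ℓ, and F_{ℓ+1,ℓ} = 1 for all ℓ ≤ n−1. -/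
/-- Permutation matrix with column convention: the j-th column is e_{w(j)}. -/
def permMat {n : ℕ} (K : Type*) [Field K] (w : Equiv.Perm (Fin n)) :
    Matrix (Fin n) (Fin n) K :=
  fun i j => if i = w j then 1 else 0

/-! Conjugating by `P_{w₀}` turns `N` into the lower shift `S`, so `F = M⁻¹ S M` with `M⁻¹` again
lower unitriangular. Call a matrix lower triangular by `d` if it vanishes above its `d`-th
subdiagonal. Under multiplication these depths add up and the entries on the lowest diagonals
multiply, so `F` is lower triangular by `0 + 1 + 0 = 1` with subdiagonal entries `1 · 1 · 1`. -/

theorem permMat_eq_permMatrix {n : ℕ} (K : Type*) [Field K] (w : Equiv.Perm (Fin n)) :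
    permMat K w = (w⁻¹).permMatrix K := by
  ext i j
  simp only [permMat, PEquiv.toMatrix_apply, Equiv.toPEquiv_apply, Option.mem_some_iff,
    Equiv.Perm.inv_def, Equiv.symm_apply_eq]

theorem inv_permMat_mul_mul_permMat {n : ℕ} (K : Type*) [Field K] (w : Equiv.Perm (Fin n))
    (A : Matrix (Fin n) (Fin n) K) : (permMat K w)⁻¹ * A * permMat K w = A.submatrix w w := by
  have hinv : (permMat K w)⁻¹ = w.permMatrix K := by
    rw [permMat_eq_permMatrix]
    exact Matrix.inv_eq_left_inv (by
      rw [← Matrix.permMatrix_mul, inv_mul_cancel, Matrix.permMatrix_one])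
  rw [hinv, permMat_eq_permMatrix, PEquiv.toMatrix_toPEquiv_mul, PEquiv.mul_toMatrix_toPEquiv]
  rfl

namespace Matrix

variable {n : ℕ} {R : Type*}

theorem submatrix_revPerm_apply_of_upper_shift [Zero R] [One R] {N : Matrix (Fin n) (Fin n) R}
    (hN : ∀ i j : Fin n, N i j = if (j : ℕ) = i + 1 then 1 else 0) (i j : Fin n) :
    N.submatrix Fin.revPerm Fin.revPerm i j = if (i : ℕ) = j + 1 then 1 else 0 := by
  simp only [submatrix_apply, hN, Fin.revPerm_apply, Fin.val_rev]
  have := i.isLt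
  have := j.isLt
  congr 1
  exact propext (by omega)

def IsLowerTriangularBy [Zero R] (d : ℕ) (A : Matrix (Fin n) (Fin n) R) : Prop :=
  ∀ i j : Fin n, (i : ℕ) < j + d → A i j = 0

theorem isLowerTriangularBy_zero_iff [Zero R] {A : Matrix (Fin n) (Fin n) R} :
    IsLowerTriangularBy 0 A ↔ A.IsLowerTriangular := by
  simp only [IsLowerTriangularBy, add_zero, ← Fin.lt_def]
  rfl

namespace IsLowerTriangularBy

section Mul

variable [NonUnitalNonAssocSemiring R] {d e : ℕ} {A B : Matrix (Fin n) (Fin n) R}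

theorem mul (hA : IsLowerTriangularBy d A) (hB : IsLowerTriangularBy e B) :
    IsLowerTriangularBy (d + e) (A * B) := by
  intro i j hij
  rw [mul_apply]
  refine Finset.sum_eq_zero fun m _ => ?_
  by_cases him : (i : ℕ) < m + d
  · rw [hA i m him, zero_mul]
  · rw [hB m j (by omega), mul_zero]

theorem mul_apply_of_eq_add (hA : IsLowerTriangularBy d A) (hB : IsLowerTriangularBy e B)
    {i m j : Fin n} (him : (i : ℕ) = m + d) (hmj : (m : ℕ) = j + e) :
    (A * B) i j = A i m * B m j := by
  rw [mul_apply]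
  refine Finset.sum_eq_single m (fun k _ hkm => ?_) (fun hm => absurd (Finset.mem_univ m) hm)
  rcases lt_or_gt_of_ne hkm with hk | hk
  · rw [hB k j (by rw [Fin.lt_def] at hk; omega), mul_zero]
  · rw [hA i k (by rw [Fin.lt_def] at hk; omega), zero_mul]

end Mul

theorem inv_of_diag_eq_one [CommRing R] {M : Matrix (Fin n) (Fin n) R}
    (hM : IsLowerTriangularBy 0 M) (hdiag : ∀ i, M i i = 1) :
    IsLowerTriangularBy 0 M⁻¹ ∧ ∀ i, M⁻¹ i i = 1 := by
  have hdet : M.det = 1 := by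
    rw [det_of_isLowerTriangular M (isLowerTriangularBy_zero_iff.mp hM)]
    simp [hdiag]
  have := M.invertibleOfIsUnitDet (by simp [hdet])
  have hinv : IsLowerTriangularBy 0 M⁻¹ :=
    isLowerTriangularBy_zero_iff.mpr
      (blockTriangular_inv_of_blockTriangular (isLowerTriangularBy_zero_iff.mp hM))
  refine ⟨hinv, fun i => ?_⟩
  have h := congrFun (congrFun (inv_mul_of_invertible M) i) i
  rwa [hinv.mul_apply_of_eq_add hM rfl rfl, hdiag, mul_one, one_apply_eq] at h

end IsLowerTriangularBy

end Matrix

open Matrix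

/-- with N the regular nilpotent Jordan block, M lower unitriangular,
P := P_{w₀}·M (w₀ the longest permutation, 0-indexed `Fin.revPerm`), and
F := P⁻¹·N·P, we have F_{k,ℓ} = 0 whenever k ≤ ℓ, and F_{ℓ+1,ℓ} = 1. -/
theorem conjugated_nilpotent_entries {n : ℕ} (K : Type*) [Field K]
    (M : Matrix (Fin n) (Fin n) K)
    (hdiag : ∀ i, M i i = 1)
    (hlow : ∀ i j : Fin n, i < j → M i j = 0)
    (N : Matrix (Fin n) (Fin n) K)
    (hN : ∀ i j : Fin n, N i j = if (j : ℕ) = (i : ℕ) + 1 then 1 else 0) :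
    let P := permMat K (Fin.revPerm : Equiv.Perm (Fin n)) * M
    let F := P⁻¹ * N * P
    (∀ k ℓ : Fin n, k ≤ ℓ → F k ℓ = 0) ∧
    (∀ k ℓ : Fin n, (k : ℕ) = (ℓ : ℕ) + 1 → F k ℓ = 1) := by
  intro P F
  have hF : F = M⁻¹ * N.submatrix Fin.revPerm Fin.revPerm * M := by
    rw [← inv_permMat_mul_mul_permMat]
    simp only [F, P, Matrix.mul_inv_rev, Matrix.mul_assoc]
  have hS := submatrix_revPerm_apply_of_upper_shift hN
  set S := N.submatrix Fin.revPerm Fin.revPerm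
  have hSlow : IsLowerTriangularBy 1 S := fun i j hij => by rw [hS, if_neg (by omega)]
  have hMlow : IsLowerTriangularBy 0 M := isLowerTriangularBy_zero_iff.mpr hlow
  obtain ⟨hMinvlow, hMinvdiag⟩ := hMlow.inv_of_diag_eq_one hdiag
  have hFlow := (hMinvlow.mul hSlow).mul hMlow
  refine ⟨fun k ℓ hkℓ => ?_, fun k ℓ hkℓ => ?_⟩
  · rw [hF]
    exact hFlow k ℓ (by rw [Fin.le_def] at hkℓ; omega)
  · rw [hF, (hMinvlow.mul hSlow).mul_apply_of_eq_add hMlow (m := ℓ) hkℓ rfl,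
      hMinvlow.mul_apply_of_eq_add hSlow (m := k) rfl hkℓ, hMinvdiag, hS, if_pos hkℓ, hdiag,
      one_mul, mul_one]
end
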